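/- Let Ω ⊂ ℝⁿ be a bounded domain, ∅ ≠ ω ⊆ Ω open, X^δ a finite-dimensional subspace of L₂(Ω), Y^δ a finite-dimensional Hilbert space, B^δ ∈ L(L₂(Ω), (Y^δ)'), and 0 ≤ ε ≤ 1. Assume that |||z|||_{ε,δ} := (‖B^δ z‖²_{(Y^δ)'} + ‖Cz‖²_{L₂(ω)} + ε² ‖z‖²_{L₂(Ω)})^{1/2} is a norm on X^δ (i.e. z ∈ X^δ with B^δ z = 0, z|_ω = 0 and εz = 0 implies z = 0). Define M^δ : X^δ × Y^δ → (X^δ × Y^δ)' by M^δ(u,v)(z̃,ṽ) := ⟨v, ṽ⟩_{Y^δ} + (B^δ u)(ṽ) + (B^δ z̃)(v) − ⟨Cu, Cz̃⟩_{L₂(ω)} − ε² ⟨u, z̃⟩_{L₂(Ω)}. Then M^δ is invertible and |||u|||_{ε,δ} + ‖v‖_{Y^δ} ≂ ‖M^δ(u,v)‖_{((X^δ, |||·|||_{ε,δ}) × Y^δ)'}, with equivalence constants independent of δ, ε, X^δ, Y^δ and B^δ. -/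

import Mathlib

open MeasureTheory

noncomputable section

/-- `n`-dimensional Euclidean space. -/
abbrev Eu (n : ℕ) : Type := EuclideanSpace ℝ (Fin n)

/-- A smooth compactly supported test function with support contained in `Ω`. -/
def IsTestFun {n : ℕ} (Ω : Set (Eu n)) (φ : Eu n → ℝ) : Prop :=
  ContDiff ℝ (⊤ : ℕ∞) φ ∧ HasCompactSupport φ ∧ tsupport φ ⊆ Ω

/-- The pointwise Laplacian, expressed via the second iterated Fréchet derivative. -/
def lap {n : ℕ} (f : Eu n → ℝ) (x : Eu n) : ℝ :=
  ∑ i : Fin n,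
    iteratedFDeriv ℝ 2 f x ![EuclideanSpace.single i 1, EuclideanSpace.single i 1]

/-- The `L₂` norm of `f` on the set `S`. -/
def L2 {n : ℕ} (f : Eu n → ℝ) (S : Set (Eu n)) : ℝ :=
  Real.sqrt (∫ x in S, (f x) ^ 2)

/-- The (full) `H²` norm of `f` on the set `S`. -/
def H2norm {n : ℕ} (f : Eu n → ℝ) (S : Set (Eu n)) : ℝ :=
  Real.sqrt (∫ x in S, ((f x) ^ 2 + ‖fderiv ℝ f x‖ ^ 2 + ‖iteratedFDeriv ℝ 2 f x‖ ^ 2))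

/-- `H²₀(Ω)`: the closure of the test functions in the `H²(Ω)`-norm. -/
def H20 {n : ℕ} (Ω : Set (Eu n)) : Set (Eu n → ℝ) :=
  {v | ∀ ε > 0, ∃ φ, IsTestFun Ω φ ∧ H2norm (fun x => v x - φ x) Ω < ε}

/-- The ultra-weak Laplace operator: `(B z)(v) = -∫_Ω z Δv dx`. -/
def Bop {n : ℕ} (Ω : Set (Eu n)) (z v : Eu n → ℝ) : ℝ :=
  -∫ x in Ω, z x * lap v x

/-- The `H⁻²(Ω) = (H²₀(Ω))'` dual norm of a functional `F`. -/
def Hm2norm {n : ℕ} (Ω : Set (Eu n)) (F : (Eu n → ℝ) → ℝ) : ℝ :=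
  sSup {r | ∃ v ∈ H20 Ω, H2norm v Ω ≠ 0 ∧ r = F v / H2norm v Ω}

/-- `‖Bz‖_{H⁻²(Ω)}`. -/
def Bnorm {n : ℕ} (Ω : Set (Eu n)) (z : Eu n → ℝ) : ℝ := Hm2norm Ω (Bop Ω z)

/-- `‖Az‖_{H⁻²(Ω) × L₂(ω)}` for `A = (B, C)`, `Cz = z|_ω`. -/
def Anorm {n : ℕ} (Ω ω : Set (Eu n)) (z : Eu n → ℝ) : ℝ :=
  Real.sqrt (Bnorm Ω z ^ 2 + L2 z ω ^ 2)

/-- `w` is harmonic on `Ω` in the distributional sense. -/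
def IsHarmonicOn {n : ℕ} (Ω : Set (Eu n)) (w : Eu n → ℝ) : Prop :=
  ∀ φ, IsTestFun Ω φ → ∫ x in Ω, w x * lap φ x = 0

/-- A bounded domain: open, connected and bounded. -/
def IsBddDomain {n : ℕ} (Ω : Set (Eu n)) : Prop :=
  IsOpen Ω ∧ IsConnected Ω ∧ Bornology.IsBounded Ω

/-- Membership in `H⁻²(Ω)`: a functional which is linear and bounded on `H²₀(Ω)`. -/
def MemHm2 {n : ℕ} (Ω : Set (Eu n)) (F : (Eu n → ℝ) → ℝ) : Prop :=
  (∀ v ∈ H20 Ω, ∀ w ∈ H20 Ω, F (fun x => v x + w x) = F v + F w) ∧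
  (∀ c : ℝ, ∀ v ∈ H20 Ω, F (fun x => c * v x) = c * F v) ∧
  (∃ M : ℝ, ∀ v ∈ H20 Ω, |F v| ≤ M * H2norm v Ω)

/-- data error `ℰ_data = ‖Au - (ℓ,q)‖_{H⁻²(Ω) × L₂(ω)}`. -/
def EdataN {n : ℕ} (Ω ω : Set (Eu n)) (u : Eu n → ℝ) (ℓ : (Eu n → ℝ) → ℝ)
    (q : Eu n → ℝ) : ℝ :=
  Real.sqrt (Hm2norm Ω (fun v => Bop Ω u v - ℓ v) ^ 2 + L2 (fun x => u x - q x) ω ^ 2)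

/-- best approximation error `ℰ_appr = min_{z ∈ X} ‖u - z‖_{L₂(Ω)}`. -/
def EapprN {n : ℕ} (Ω : Set (Eu n)) (X : Submodule ℝ (Eu n → ℝ)) (u : Eu n → ℝ) : ℝ :=
  sInf {r | ∃ z ∈ X, r = L2 (fun x => u x - z x) Ω}

/-!
Testing `M(u, v)` against `(-u, v)` yields `‖Cu‖² + ε²‖u‖² + ‖v‖²`, and testing it against
`(0, w)`, with `w` the Riesz representative of `Bu`, yields `‖Bu‖² + ⟪v, w⟫`. Together these
bound `|||u||| + ‖v‖` by a multiple of the dual norm of `M(u, v)`; Cauchy–Schwarz, term by term,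
gives the converse bound. In finite dimensions the lower bound makes `M` injective, hence
invertible. None of this depends on `X`, `Y` or `B`, which is why the constants are absolute.
-/

open RealInnerProductSpace

namespace MixedSystem

variable {X Y E : Type*} [AddCommGroup X] [Module ℝ X]
  [NormedAddCommGroup Y] [InnerProductSpace ℝ Y] [NormedAddCommGroup E] [InnerProductSpace ℝ E]
  (B : X →ₗ[ℝ] Y →L[ℝ] ℝ) (C : X →ₗ[ℝ] E)

/-- The saddle-point form `M^δ`, where `C` stands for `z ↦ (Cz, εz)` (see `observation`). -/
def form : (X × Y) →ₗ[ℝ] (X × Y) →ₗ[ℝ] ℝ :=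
  LinearMap.mk₂ ℝ (fun p q => ⟪p.2, q.2⟫ + B p.1 q.2 + B q.1 p.2 - ⟪C p.1, C q.1⟫)
    (fun p p' q => by
      simp only [Prod.fst_add, Prod.snd_add, map_add, inner_add_left, add_apply]
      ring)
    (fun c p q => by
      simp only [Prod.smul_fst, Prod.smul_snd, map_smul, real_inner_smul_left,
        smul_apply, smul_eq_mul]
      ring)
    (fun p q q' => by
      simp only [Prod.fst_add, Prod.snd_add, map_add, inner_add_right, add_apply]
      ring)
    (fun c p q => by
      simp only [Prod.smul_fst, Prod.smul_snd, map_smul, real_inner_smul_right,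
        smul_apply, smul_eq_mul]
      ring)

theorem form_apply (p q : X × Y) :
    form B C p q = ⟪p.2, q.2⟫ + B p.1 q.2 + B q.1 p.2 - ⟪C p.1, C q.1⟫ := rfl

/-- The norm of `(X, |||·|||) × Y` with `|||u|||² = ‖B u‖² + ‖C u‖²`. -/
def prodNorm (p : X × Y) : ℝ := √(‖B p.1‖ ^ 2 + ‖C p.1‖ ^ 2 + ‖p.2‖ ^ 2)

def dualNorm (p : X × Y) : ℝ :=
  sSup {r | ∃ q, prodNorm B C q ≠ 0 ∧ r = form B C p q / prodNorm B C q}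

theorem prodNorm_nonneg (p : X × Y) : 0 ≤ prodNorm B C p := Real.sqrt_nonneg _

theorem prodNorm_sq (p : X × Y) :
    prodNorm B C p ^ 2 = ‖B p.1‖ ^ 2 + ‖C p.1‖ ^ 2 + ‖p.2‖ ^ 2 :=
  Real.sq_sqrt (by positivity)

theorem prodNorm_neg (p : X × Y) : prodNorm B C (-p) = prodNorm B C p := by
  simp [prodNorm]

theorem prodNorm_neg_fst (u : X) (v : Y) : prodNorm B C (-u, v) = prodNorm B C (u, v) := by
  simp [prodNorm]

theorem norm_le_prodNorm {x : ℝ} (p : X × Y) (hx : 0 ≤ x)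
    (h : x ^ 2 ≤ ‖B p.1‖ ^ 2 + ‖C p.1‖ ^ 2 + ‖p.2‖ ^ 2) : x ≤ prodNorm B C p :=
  (Real.le_sqrt hx (by positivity)).mpr h

theorem norm_B_le_prodNorm (p : X × Y) : ‖B p.1‖ ≤ prodNorm B C p :=
  norm_le_prodNorm B C p (norm_nonneg _) (by nlinarith [norm_nonneg (C p.1), norm_nonneg p.2])

theorem norm_C_le_prodNorm (p : X × Y) : ‖C p.1‖ ≤ prodNorm B C p :=
  norm_le_prodNorm B C p (norm_nonneg _) (by nlinarith [norm_nonneg (B p.1), norm_nonneg p.2])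

theorem norm_snd_le_prodNorm (p : X × Y) : ‖p.2‖ ≤ prodNorm B C p :=
  norm_le_prodNorm B C p (norm_nonneg _) (by nlinarith [norm_nonneg (B p.1), norm_nonneg (C p.1)])

theorem prodNorm_le_sqrt_add (p : X × Y) :
    prodNorm B C p ≤ √(‖B p.1‖ ^ 2 + ‖C p.1‖ ^ 2) + ‖p.2‖ := by
  have h := Real.sq_sqrt (by positivity : 0 ≤ ‖B p.1‖ ^ 2 + ‖C p.1‖ ^ 2)
  refine Real.sqrt_le_iff.mpr ⟨by positivity, ?_⟩
  nlinarith [Real.sqrt_nonneg (‖B p.1‖ ^ 2 + ‖C p.1‖ ^ 2), norm_nonneg p.2]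

theorem sqrt_add_le_two_mul_prodNorm (p : X × Y) :
    √(‖B p.1‖ ^ 2 + ‖C p.1‖ ^ 2) + ‖p.2‖ ≤ 2 * prodNorm B C p := by
  have : √(‖B p.1‖ ^ 2 + ‖C p.1‖ ^ 2) ≤ prodNorm B C p :=
    Real.sqrt_le_sqrt (by nlinarith [norm_nonneg p.2])
  linarith [norm_snd_le_prodNorm B C p]

theorem abs_form_le (p q : X × Y) :
    |form B C p q| ≤ 4 * (prodNorm B C p * prodNorm B C q) := by
  have hp := prodNorm_nonneg B C p
  have hq := prodNorm_nonneg B C q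
  have h₁ : |⟪p.2, q.2⟫| ≤ prodNorm B C p * prodNorm B C q :=
    (abs_real_inner_le_norm _ _).trans <|
      mul_le_mul (norm_snd_le_prodNorm B C p) (norm_snd_le_prodNorm B C q) (norm_nonneg _) hp
  have h₂ : |B p.1 q.2| ≤ prodNorm B C p * prodNorm B C q :=
    ((B p.1).le_opNorm q.2).trans <|
      mul_le_mul (norm_B_le_prodNorm B C p) (norm_snd_le_prodNorm B C q) (norm_nonneg _) hp
  have h₃ : |B q.1 p.2| ≤ prodNorm B C p * prodNorm B C q := by
    rw [mul_comm]
    exact ((B q.1).le_opNorm p.2).trans <|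
      mul_le_mul (norm_B_le_prodNorm B C q) (norm_snd_le_prodNorm B C p) (norm_nonneg _) hq
  have h₄ : |⟪C p.1, C q.1⟫| ≤ prodNorm B C p * prodNorm B C q :=
    (abs_real_inner_le_norm _ _).trans <|
      mul_le_mul (norm_C_le_prodNorm B C p) (norm_C_le_prodNorm B C q) (norm_nonneg _) hp
  rw [form_apply, abs_le]
  obtain ⟨h₁, h₁'⟩ := abs_le.mp h₁
  obtain ⟨h₂, h₂'⟩ := abs_le.mp h₂
  obtain ⟨h₃, h₃'⟩ := abs_le.mp h₃
  obtain ⟨h₄, h₄'⟩ := abs_le.mp h₄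
  constructor <;> linarith

theorem form_div_prodNorm_le (p q : X × Y) :
    form B C p q / prodNorm B C q ≤ 4 * prodNorm B C p := by
  refine div_le_of_le_mul₀ (prodNorm_nonneg B C q) (by linarith [prodNorm_nonneg B C p]) ?_
  linarith [le_abs_self (form B C p q), abs_form_le B C p q]

theorem dualNorm_le (p : X × Y) : dualNorm B C p ≤ 4 * prodNorm B C p := by
  refine Real.sSup_le ?_ (by linarith [prodNorm_nonneg B C p])
  rintro r ⟨q, -, rfl⟩
  exact form_div_prodNorm_le B C p q

theorem form_div_prodNorm_le_dualNorm (p : X × Y) {q : X × Y} (hq : prodNorm B C q ≠ 0) :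
    form B C p q / prodNorm B C q ≤ dualNorm B C p := by
  refine le_csSup ⟨4 * prodNorm B C p, ?_⟩ ⟨q, hq, rfl⟩
  rintro r ⟨q', -, rfl⟩
  exact form_div_prodNorm_le B C p q'

theorem dualNorm_nonneg (p : X × Y) : 0 ≤ dualNorm B C p := by
  by_cases h : ∃ q, prodNorm B C q ≠ 0
  · obtain ⟨q, hq⟩ := h
    have h₁ := form_div_prodNorm_le_dualNorm B C p hq
    have h₂ := form_div_prodNorm_le_dualNorm B C p (q := -q) (by rwa [prodNorm_neg])
    rw [map_neg, prodNorm_neg, neg_div] at h₂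
    linarith
  · push Not at h
    have : {r | ∃ q, prodNorm B C q ≠ 0 ∧ r = form B C p q / prodNorm B C q} = ∅ := by
      ext r; simp [h]
    rw [dualNorm, this, Real.sSup_empty]

theorem norm_C_sq_add_norm_sq_le (u : X) (v : Y) :
    ‖C u‖ ^ 2 + ‖v‖ ^ 2 ≤ dualNorm B C (u, v) * prodNorm B C (u, v) := by
  have hN := prodNorm_sq B C (u, v)
  rcases eq_or_ne (prodNorm B C (u, v)) 0 with h | h
  · rw [h] at hN ⊢
    nlinarith [sq_nonneg ‖B u‖]
  have htest := form_div_prodNorm_le_dualNorm B C (u, v) (q := (-u, v))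
    (by rwa [prodNorm_neg_fst])
  rw [prodNorm_neg_fst, div_le_iff₀ ((prodNorm_nonneg B C _).lt_of_ne' h), form_apply] at htest
  simp only [map_neg, neg_apply, inner_neg_right, real_inner_self_eq_norm_sq] at htest
  linarith

theorem norm_B_sub_norm_le_dualNorm [CompleteSpace Y] (u : X) (v : Y) :
    ‖B u‖ - ‖v‖ ≤ dualNorm B C (u, v) := by
  rcases eq_or_ne (B u) 0 with h | h
  · rw [h, norm_zero]
    linarith [norm_nonneg v, dualNorm_nonneg B C (u, v)]
  set w := (InnerProductSpace.toDual ℝ Y).symm (B u)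
  have hw : ‖w‖ = ‖B u‖ := (InnerProductSpace.toDual ℝ Y).symm.norm_map _
  have hBw : B u w = ‖B u‖ ^ 2 := by
    rw [← InnerProductSpace.toDual_symm_apply, real_inner_self_eq_norm_sq, hw]
  have hNw : prodNorm B C (0, w) = ‖B u‖ := by simp [prodNorm, hw]
  have hpos : 0 < ‖B u‖ := norm_pos_iff.mpr h
  have htest := form_div_prodNorm_le_dualNorm B C (u, v) (q := (0, w)) (hNw ▸ hpos.ne')
  rw [hNw, div_le_iff₀ hpos] at htest
  simp only [form_apply, map_zero, zero_apply, inner_zero_right, add_zero, sub_zero,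
    hBw] at htest
  have hvw : -(‖v‖ * ‖B u‖) ≤ ⟪v, w⟫ := hw ▸ (abs_le.mp (abs_real_inner_le_norm v w)).1
  exact le_of_mul_le_mul_right (by nlinarith) hpos

theorem prodNorm_le_dualNorm [CompleteSpace Y] (p : X × Y) :
    prodNorm B C p ≤ 4 * dualNorm B C p := by
  obtain ⟨u, v⟩ := p
  set N := prodNorm B C (u, v)
  set S := dualNorm B C (u, v)
  have hN : N ^ 2 = ‖B u‖ ^ 2 + ‖C u‖ ^ 2 + ‖v‖ ^ 2 := prodNorm_sq B C (u, v)
  have hN₀ : 0 ≤ N := prodNorm_nonneg B C _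
  have hS₀ : 0 ≤ S := dualNorm_nonneg B C _
  have hCv := norm_C_sq_add_norm_sq_le B C u v
  have hB : ‖B u‖ ^ 2 ≤ (S + ‖v‖) ^ 2 :=
    pow_le_pow_left₀ (norm_nonneg _) (by linarith [norm_B_sub_norm_le_dualNorm B C u v]) 2
  have hquad : N ^ 2 ≤ 2 * S ^ 2 + 3 * (S * N) := by nlinarith [sq_nonneg (S - ‖v‖)]
  nlinarith

theorem form_injective [CompleteSpace Y] (hBC : ∀ u, B u = 0 → C u = 0 → u = 0) :
    Function.Injective (form B C) := by
  rw [← LinearMap.ker_eq_bot, LinearMap.ker_eq_bot']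
  intro p hp
  have hS : dualNorm B C p ≤ 0 := by
    refine Real.sSup_le ?_ le_rfl
    rintro r ⟨q, -, rfl⟩
    simp [hp]
  have hN : prodNorm B C p ≤ 0 := by linarith [prodNorm_le_dualNorm B C p]
  have hB := norm_le_zero_iff.mp ((norm_B_le_prodNorm B C p).trans hN)
  have hC := norm_le_zero_iff.mp ((norm_C_le_prodNorm B C p).trans hN)
  have hv := norm_le_zero_iff.mp ((norm_snd_le_prodNorm B C p).trans hN)
  exact Prod.ext (hBC _ hB hC) hv

theorem form_surjective [FiniteDimensional ℝ X] [FiniteDimensional ℝ Y]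
    (hBC : ∀ u, B u = 0 → C u = 0 → u = 0) : Function.Surjective (form B C) :=
  (LinearMap.injective_iff_surjective_of_finrank_eq_finrank
    Subspace.dual_finrank_eq.symm).mp (form_injective B C hBC)

end MixedSystem

section L2

variable {α : Type*} [MeasurableSpace α] {μ : Measure α}

theorem integral_mul_eq_inner_toLp {f g : α → ℝ} (hf : MemLp f 2 μ) (hg : MemLp g 2 μ) :
    ∫ x, f x * g x ∂μ = ⟪hf.toLp f, hg.toLp g⟫ := by
  rw [L2.inner_def]
  refine integral_congr_ae ?_
  filter_upwards [hf.coeFn_toLp, hg.coeFn_toLp] with x hfx hgx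
  simp [hfx, hgx, mul_comm]

theorem sqrt_integral_sq_eq_norm_toLp {f : α → ℝ} (hf : MemLp f 2 μ) :
    √(∫ x, f x ^ 2 ∂μ) = ‖hf.toLp f‖ := by
  simp_rw [norm_eq_sqrt_real_inner, ← integral_mul_eq_inner_toLp, sq]

def Submodule.toL2 (X : Submodule ℝ (α → ℝ)) (hX : ∀ z ∈ X, MemLp z 2 μ) :
    X →ₗ[ℝ] Lp ℝ 2 μ where
  toFun z := (hX z z.2).toLp z
  map_add' _ _ := MemLp.toLp_add _ _
  map_smul' c _ := MemLp.toLp_const_smul c _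

end L2

section Observation

variable {n : ℕ} {ω Ω : Set (Eu n)} (X : Submodule ℝ (Eu n → ℝ))
  (hω : ∀ z ∈ X, MemLp z 2 (volume.restrict ω)) (hΩ : ∀ z ∈ X, MemLp z 2 (volume.restrict Ω))
  (ε : ℝ)

/-- `z ↦ (z|_ω, εz)`, so that `|||z|||² = ‖B z‖² + ‖observation z‖²`. -/
def observation :
    X →ₗ[ℝ] WithLp 2 (Lp ℝ 2 (volume.restrict ω) × Lp ℝ 2 (volume.restrict Ω)) :=
  (WithLp.linearEquiv 2 ℝ _).symm.toLinearMap ∘ₗ (X.toL2 hω).prod (ε • X.toL2 hΩ)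

theorem inner_observation (u z : X) :
    ⟪observation X hω hΩ ε u, observation X hω hΩ ε z⟫
      = (∫ x in ω, (u : Eu n → ℝ) x * (z : Eu n → ℝ) x)
        + ε ^ 2 * ∫ x in Ω, (u : Eu n → ℝ) x * (z : Eu n → ℝ) x := by
  rw [WithLp.prod_inner_apply, integral_mul_eq_inner_toLp (hω u u.2) (hω z z.2),
    integral_mul_eq_inner_toLp (hΩ u u.2) (hΩ z z.2)]
  simp [observation, Submodule.toL2, real_inner_smul_left, real_inner_smul_right]
  ring

theorem norm_observation_sq (u : X) :
    ‖observation X hω hΩ ε u‖ ^ 2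
      = L2 (u : Eu n → ℝ) ω ^ 2 + ε ^ 2 * L2 (u : Eu n → ℝ) Ω ^ 2 := by
  rw [WithLp.prod_norm_sq_eq_of_L2, L2, L2, sqrt_integral_sq_eq_norm_toLp (hω u u.2),
    sqrt_integral_sq_eq_norm_toLp (hΩ u u.2)]
  simp [observation, Submodule.toL2, norm_smul, mul_pow]

theorem observation_eq_zero_iff (u : X) :
    observation X hω hΩ ε u = 0 ↔ L2 (u : Eu n → ℝ) ω = 0 ∧ ε * L2 (u : Eu n → ℝ) Ω = 0 := by
  rw [← norm_eq_zero, ← pow_eq_zero_iff two_ne_zero, norm_observation_sq, ← mul_pow,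
    add_eq_zero_iff_of_nonneg (sq_nonneg _) (sq_nonneg _), pow_eq_zero_iff two_ne_zero,
    pow_eq_zero_iff two_ne_zero]

variable {Y : Type*} [NormedAddCommGroup Y] [InnerProductSpace ℝ Y]
  (Bd : (Eu n → ℝ) →ₗ[ℝ] Y →L[ℝ] ℝ)

theorem form_observation_apply (p q : X × Y) :
    MixedSystem.form (Bd ∘ₗ X.subtype) (observation X hω hΩ ε) p q
      = ⟪p.2, q.2⟫ + Bd p.1 q.2 + Bd q.1 p.2
        - (∫ x in ω, (p.1 : Eu n → ℝ) x * (q.1 : Eu n → ℝ) x)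
        - ε ^ 2 * ∫ x in Ω, (p.1 : Eu n → ℝ) x * (q.1 : Eu n → ℝ) x := by
  rw [MixedSystem.form_apply, inner_observation, sub_sub]
  rfl

theorem norm_sq_add_norm_observation_sq (z : X) :
    ‖(Bd ∘ₗ X.subtype) z‖ ^ 2 + ‖observation X hω hΩ ε z‖ ^ 2
      = ‖Bd z‖ ^ 2 + L2 (z : Eu n → ℝ) ω ^ 2 + ε ^ 2 * L2 (z : Eu n → ℝ) Ω ^ 2 := by
  rw [norm_observation_sq, ← add_assoc]
  rfl

end Observation

open MixedSystem

open RealInnerProductSpace in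
/-- **Well-posedness of the discrete mixed (saddle point) system** (Lemma 5.1):
if `|||·|||_{ε,δ}` is a norm on the finite-dimensional trial space `X`, then the
saddle-point operator `M^δ` is invertible and
`|||u|||_{ε,δ} + ‖v‖_{Y^δ} ≂ ‖M^δ(u,v)‖_{((X,|||·|||_{ε,δ}) × Y^δ)'}`,
with equivalence constants independent of `δ`, `ε`, `X^δ`, `Y^δ` and `B^δ`. -/
theorem mixed_system_wellposed :
    ∃ c > (0 : ℝ), ∃ C > (0 : ℝ),
      ∀ {n : ℕ} (Ω ω : Set (Eu n)), IsBddDomain Ω → IsOpen ω → ω.Nonempty → ω ⊆ Ω →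
      ∀ (X : Submodule ℝ (Eu n → ℝ)) (Y : Type)
        [NormedAddCommGroup Y] [InnerProductSpace ℝ Y] [FiniteDimensional ℝ Y]
        (Bd : (Eu n → ℝ) →ₗ[ℝ] (Y →L[ℝ] ℝ)) (ε : ℝ),
        FiniteDimensional ℝ X →
        (∀ z ∈ X, MemLp z 2 (volume.restrict Ω)) →
        -- `B^δ ∈ 𝓛(L₂(Ω), (Y^δ)')`
        (∃ M : ℝ, ∀ z : Eu n → ℝ, ‖Bd z‖ ≤ M * L2 z Ω) →
        0 ≤ ε → ε ≤ 1 →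
        -- `|||·|||_{ε,δ}` is a norm on `X`
        (∀ z ∈ X, Bd z = 0 → L2 z ω = 0 → ε * L2 z Ω = 0 → z = 0) →
        -- `M^δ` is invertible (here: surjective onto the dual of `X × Y`; injectivity
        -- follows from the lower bound below)
        ((∀ φ : (X × Y) →ₗ[ℝ] ℝ, ∃ p : X × Y, ∀ q : X × Y,
            (⟪p.2, q.2⟫ + Bd p.1 q.2 + Bd q.1 p.2
              - (∫ x in ω, (p.1 : Eu n → ℝ) x * (q.1 : Eu n → ℝ) x)
              - ε ^ 2 * ∫ x in Ω, (p.1 : Eu n → ℝ) x * (q.1 : Eu n → ℝ) x) = φ q) ∧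
        -- two-sided bound `|||u|||_{ε,δ} + ‖v‖ ≂ ‖M^δ(u,v)‖`
          (∀ p : X × Y,
            c * (Real.sqrt (‖Bd p.1‖ ^ 2 + L2 (p.1 : Eu n → ℝ) ω ^ 2
                  + ε ^ 2 * L2 (p.1 : Eu n → ℝ) Ω ^ 2) + ‖p.2‖)
              ≤ sSup {r : ℝ | ∃ q : X × Y,
                  Real.sqrt ((‖Bd q.1‖ ^ 2 + L2 (q.1 : Eu n → ℝ) ω ^ 2
                    + ε ^ 2 * L2 (q.1 : Eu n → ℝ) Ω ^ 2) + ‖q.2‖ ^ 2) ≠ 0 ∧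
                  r = (⟪p.2, q.2⟫ + Bd p.1 q.2 + Bd q.1 p.2
                      - (∫ x in ω, (p.1 : Eu n → ℝ) x * (q.1 : Eu n → ℝ) x)
                      - ε ^ 2 * ∫ x in Ω, (p.1 : Eu n → ℝ) x * (q.1 : Eu n → ℝ) x)
                    / Real.sqrt ((‖Bd q.1‖ ^ 2 + L2 (q.1 : Eu n → ℝ) ω ^ 2
                    + ε ^ 2 * L2 (q.1 : Eu n → ℝ) Ω ^ 2) + ‖q.2‖ ^ 2)} ∧
            sSup {r : ℝ | ∃ q : X × Y,
                  Real.sqrt ((‖Bd q.1‖ ^ 2 + L2 (q.1 : Eu n → ℝ) ω ^ 2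
                    + ε ^ 2 * L2 (q.1 : Eu n → ℝ) Ω ^ 2) + ‖q.2‖ ^ 2) ≠ 0 ∧
                  r = (⟪p.2, q.2⟫ + Bd p.1 q.2 + Bd q.1 p.2
                      - (∫ x in ω, (p.1 : Eu n → ℝ) x * (q.1 : Eu n → ℝ) x)
                      - ε ^ 2 * ∫ x in Ω, (p.1 : Eu n → ℝ) x * (q.1 : Eu n → ℝ) x)
                    / Real.sqrt ((‖Bd q.1‖ ^ 2 + L2 (q.1 : Eu n → ℝ) ω ^ 2
                    + ε ^ 2 * L2 (q.1 : Eu n → ℝ) Ω ^ 2) + ‖q.2‖ ^ 2)}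
              ≤ C * (Real.sqrt (‖Bd p.1‖ ^ 2 + L2 (p.1 : Eu n → ℝ) ω ^ 2
                  + ε ^ 2 * L2 (p.1 : Eu n → ℝ) Ω ^ 2) + ‖p.2‖))) := by
  refine ⟨1 / 8, by norm_num, 4, by norm_num, ?_⟩
  intro n Ω ω _ _ _ hωΩ X Y _ _ _ Bd ε hX hXΩ _ _ _ hnorm
  have hXω : ∀ z ∈ X, MemLp z 2 (volume.restrict ω) := fun z hz =>
    (hXΩ z hz).mono_measure (Measure.restrict_mono hωΩ le_rfl)
  have hBC : ∀ u, (Bd ∘ₗ X.subtype) u = 0 → observation X hXω hXΩ ε u = 0 → u = 0 := by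
    intro u hB hC
    obtain ⟨hCu, hεu⟩ := (observation_eq_zero_iff X hXω hXΩ ε u).mp hC
    exact Subtype.ext (hnorm u u.2 hB hCu hεu)
  simp only [← form_observation_apply X hXω hXΩ ε Bd,
    ← norm_sq_add_norm_observation_sq X hXω hXΩ ε Bd]
  set B := Bd ∘ₗ X.subtype
  set C := observation X hXω hXΩ ε
  refine ⟨fun φ => ?_, fun p => ⟨?_, ?_⟩⟩
  · have := hX
    obtain ⟨p, hp⟩ := form_surjective B C hBC φ
    exact ⟨p, LinearMap.congr_fun hp⟩
  · change _ ≤ dualNorm B C p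
    linarith [sqrt_add_le_two_mul_prodNorm B C p, prodNorm_le_dualNorm B C p]
  · change dualNorm B C p ≤ _
    linarith [dualNorm_le B C p, prodNorm_le_sqrt_add B C p]

end
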